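/- Suppose a is eventually periodic, i.e., there exist ℓ ≥ 1 and k ≥ 0 with a(j+ℓ) = a(j) for all j > k. Let r : ℕ → ℤ be any sequence satisfying the recurrence r(n) = a(n)·r(n−1) + r(n−2) for all n ≥ 2, with arbitrary initial values r(0), r(1) ∈ ℤ. Then the generating function ∑_{n≥0} r(n)·zⁿ ∈ ℤ[[z]] is rational: there exist polynomials u, v ∈ ℤ[z] with v having constant coefficient 1 such that v · ∑_{n≥0} r(n)·zⁿ = u in ℤ[[z]]. -/

import Mathlib

/-!
With the transfer matrices `M n = !![a n, 1; 1, 0]`, the state vectors `V n = (r (n+1), r n)`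
satisfy `V (n+1) = M (n+2) V n`, so `V (n+ℓ) = P_{n+1} V n` with `P_n = M (n+ℓ) ⋯ M (n+1)`.
Beyond the preperiod `P_n` is periodic in `n` and `P_{n+1}` is the conjugate of `P_n` by
`M (n+1)`, so its trace `T` and determinant `D` are eventually constant. Cayley–Hamilton
`P² = T P - D` then gives the constant-coefficient recurrence `r (m+2ℓ) = T r (m+ℓ) - D r m`,
whence `(1 - T X^ℓ + D X^{2ℓ}) ∑ r n Xⁿ` is a polynomial.
-/

open Matrix

namespace PowerSeries

variable {R : Type*} [CommRing R]

theorem coe_trunc_eq_self_of_coeff_eq_zero {N : ℕ} {f : R⟦X⟧}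
    (hf : ∀ n, N ≤ n → coeff n f = 0) : (trunc N f : R⟦X⟧) = f := by
  ext n
  rw [Polynomial.coeff_coe, coeff_trunc]
  split_ifs with h
  · rfl
  · exact (hf n (not_lt.1 h)).symm

theorem exists_coe_mul_mk_eq_coe_of_eventually_recurrence {r : ℕ → R} {T D : R} {ℓ N : ℕ}
    (hℓ : ℓ ≠ 0) (hrec : ∀ m, N ≤ m → r (m + 2 * ℓ) = T * r (m + ℓ) - D * r m) :
    ∃ u v : Polynomial R, v.coeff 0 = 1 ∧ (v : R⟦X⟧) * mk r = (u : R⟦X⟧) := by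
  set v : Polynomial R :=
    1 - Polynomial.C T * Polynomial.X ^ ℓ + Polynomial.C D * Polynomial.X ^ (2 * ℓ)
  have hv : v.coeff 0 = 1 := by
    simp [v, Polynomial.coeff_X_pow, hℓ, hℓ.symm]
  refine ⟨trunc (N + 2 * ℓ) (v * mk r), v, hv, (coe_trunc_eq_self_of_coeff_eq_zero ?_).symm⟩
  intro n hn
  obtain ⟨m, rfl⟩ : ∃ m, n = m + 2 * ℓ := ⟨n - 2 * ℓ, by omega⟩
  simp [v, sub_mul, add_mul, mul_assoc, coeff_X_pow_mul', show ℓ ≤ m + 2 * ℓ by omega,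
    show m + 2 * ℓ - ℓ = m + ℓ by omega, hrec m (by omega)]

end PowerSeries

theorem Matrix.mul_self_eq_trace_smul_sub_det_smul {R : Type*} [CommRing R]
    (A : Matrix (Fin 2) (Fin 2) R) : A * A = A.trace • A - A.det • 1 := by
  ext i j
  fin_cases i <;> fin_cases j <;>
    simp [Matrix.mul_apply, Fin.sum_univ_two, trace_fin_two, det_fin_two] <;> ring

section TransferMatrix

variable {R : Type*} [CommRing R] (a : ℕ → R)

def transferMatrix (n : ℕ) : Matrix (Fin 2) (Fin 2) R := !![a n, 1; 1, 0]

def transferProd (n : ℕ) : ℕ → Matrix (Fin 2) (Fin 2) R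
  | 0 => 1
  | m + 1 => transferMatrix a (n + m + 1) * transferProd n m

theorem det_transferMatrix (n : ℕ) : (transferMatrix a n).det = -1 := by
  simp [transferMatrix, det_fin_two]

theorem isUnit_transferMatrix (n : ℕ) : IsUnit (transferMatrix a n) := by
  rw [isUnit_iff_isUnit_det, det_transferMatrix]
  exact isUnit_one.neg

theorem transferProd_one (n : ℕ) : transferProd a n 1 = transferMatrix a (n + 1) :=
  Matrix.mul_one _

theorem transferProd_add (n m₁ m₂ : ℕ) :
    transferProd a n (m₁ + m₂) = transferProd a (n + m₁) m₂ * transferProd a n m₁ := by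
  induction m₂ with
  | zero => simp [transferProd]
  | succ m ih =>
    rw [← add_assoc, transferProd, ih, transferProd, Matrix.mul_assoc, add_assoc n m₁ m]

theorem transferProd_mulVec {r : ℕ → R} (hr : ∀ n, r (n + 2) = a (n + 2) * r (n + 1) + r n)
    (n m : ℕ) : transferProd a (n + 1) m *ᵥ ![r (n + 1), r n] = ![r (n + m + 1), r (n + m)] := by
  induction m with
  | zero => simp [transferProd]
  | succ m ih =>
    rw [transferProd, ← Matrix.mulVec_mulVec, ih]
    ext i
    fin_cases i
    · simp [transferMatrix, Matrix.mulVec, dotProduct, Fin.sum_univ_two, ← add_assoc, hr,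
        show n + 1 + m + 1 = n + m + 2 by omega]
    · simp [transferMatrix, Matrix.mulVec, dotProduct, Fin.sum_univ_two, ← add_assoc]

variable {a} {ℓ k : ℕ}

theorem transferMatrix_add_period (hper : ∀ j, k < j → a (j + ℓ) = a j) {j : ℕ} (hj : k < j) :
    transferMatrix a (j + ℓ) = transferMatrix a j := by
  rw [transferMatrix, transferMatrix, hper j hj]

theorem transferProd_add_period (hper : ∀ j, k < j → a (j + ℓ) = a j) {n : ℕ} (hn : k ≤ n)
    (m : ℕ) : transferProd a (n + ℓ) m = transferProd a n m := by
  induction m with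
  | zero => rfl
  | succ m ih =>
    rw [transferProd, transferProd, ih, add_right_comm n ℓ, add_right_comm _ ℓ,
      transferMatrix_add_period hper (by omega)]

theorem transferProd_succ_eq_conj (hper : ∀ j, k < j → a (j + ℓ) = a j) {n : ℕ} (hn : k ≤ n) :
    transferProd a (n + 1) ℓ =
      transferMatrix a (n + 1) * transferProd a n ℓ * (transferMatrix a (n + 1))⁻¹ := by
  have hcomm : transferProd a (n + 1) ℓ * transferMatrix a (n + 1) =
      transferMatrix a (n + 1) * transferProd a n ℓ :=
    calc transferProd a (n + 1) ℓ * transferMatrix a (n + 1)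
        = transferProd a n (1 + ℓ) := by rw [transferProd_add, transferProd_one]
      _ = transferProd a n (ℓ + 1) := by rw [add_comm]
      _ = transferMatrix a (n + 1) * transferProd a n ℓ := by
        rw [transferProd, add_right_comm, transferMatrix_add_period hper (by omega)]
  rw [← hcomm, mul_nonsing_inv_cancel_right _ _
    ((isUnit_iff_isUnit_det _).1 (isUnit_transferMatrix a _))]

theorem trace_transferProd_eq (hper : ∀ j, k < j → a (j + ℓ) = a j) {n : ℕ} (hn : k ≤ n) :
    (transferProd a n ℓ).trace = (transferProd a k ℓ).trace := by
  induction n, hn using Nat.le_induction with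
  | base => rfl
  | succ n hn ih =>
    rw [transferProd_succ_eq_conj hper hn, trace_conj (isUnit_transferMatrix a _), ih]

theorem det_transferProd_eq (hper : ∀ j, k < j → a (j + ℓ) = a j) {n : ℕ} (hn : k ≤ n) :
    (transferProd a n ℓ).det = (transferProd a k ℓ).det := by
  induction n, hn using Nat.le_induction with
  | base => rfl
  | succ n hn ih =>
    rw [transferProd_succ_eq_conj hper hn, det_conj (isUnit_transferMatrix a _), ih]

theorem recurrence_add_two_mul_period (hper : ∀ j, k < j → a (j + ℓ) = a j) {r : ℕ → R}
    (hr : ∀ n, r (n + 2) = a (n + 2) * r (n + 1) + r n) {m : ℕ} (hm : k ≤ m) :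
    r (m + 2 * ℓ) =
      (transferProd a k ℓ).trace * r (m + ℓ) - (transferProd a k ℓ).det * r m := by
  set P := transferProd a (m + 1) ℓ
  have hsq : transferProd a (m + 1) (2 * ℓ) = P * P := by
    rw [two_mul, transferProd_add, transferProd_add_period hper (by omega)]
  have hstate := transferProd_mulVec a hr m (2 * ℓ)
  rw [hsq, mul_self_eq_trace_smul_sub_det_smul, sub_mulVec, smul_mulVec, smul_mulVec, one_mulVec,
    transferProd_mulVec a hr, trace_transferProd_eq hper (by omega),
    det_transferProd_eq hper (by omega)] at hstate
  simpa [sub_eq_iff_eq_add] using (congrFun hstate 1).symm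

end TransferMatrix

theorem recurrence_generating_function_rational_general
    (a : ℕ → ℕ)
    (ℓ k : ℕ) (hℓ : 1 ≤ ℓ)
    (hper : ∀ j, k < j → a (j + ℓ) = a j)
    (r : ℕ → ℤ)
    (hr : ∀ n, 2 ≤ n → r n = (a n : ℤ) * r (n - 1) + r (n - 2)) :
    ∃ u v : Polynomial ℤ, v.coeff 0 = 1 ∧
      (v : PowerSeries ℤ) * PowerSeries.mk (fun n => r n) = (u : PowerSeries ℤ) :=
  PowerSeries.exists_coe_mul_mk_eq_coe_of_eventually_recurrence (Nat.one_le_iff_ne_zero.1 hℓ)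
    fun _ hm => recurrence_add_two_mul_period (a := fun n => (a n : ℤ))
      (fun j hj => congrArg Nat.cast (hper j hj))
      (fun n => by simpa using hr (n + 2) (by omega)) hm

/-- for an eventually periodic sequence of partial quotients `a`, the
generating function of any solution `r` of the recurrence `r n = a n · r (n−1) + r (n−2)`
(with arbitrary integer initial values) is rational. -/
theorem recurrence_generating_function_rational
    (a : ℕ → ℕ) (ha : ∀ j, 1 ≤ j → 1 ≤ a j)
    (ℓ k : ℕ) (hℓ : 1 ≤ ℓ)
    (hper : ∀ j, k < j → a (j + ℓ) = a j)
    (r : ℕ → ℤ)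
    (hr : ∀ n, 2 ≤ n → r n = (a n : ℤ) * r (n - 1) + r (n - 2)) :
    ∃ u v : Polynomial ℤ, v.coeff 0 = 1 ∧
      (v : PowerSeries ℤ) * PowerSeries.mk (fun n => r n) = (u : PowerSeries ℤ) :=
  recurrence_generating_function_rational_general a ℓ k hℓ hper r hr
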